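/- For every continuously differentiable function y : ℝ → ℝ on [−π/2, π/2] with y(−π/2) = 0 and y(π/2) = 0, one has ∫_{−π/2}^{π/2} ((y′(x))² − 2·y(x)·cos(x + π/2)) dx ≥ 4/π − π/2. -/

import Mathlib

/-!
With `g x = 2/π - cos x`, the derivative of the claimed minimiser, one has `g' = sin` and
`-cos (x + π/2) = sin x`. Integrating `y g` by parts against the zero boundary values gives
`∫ (y'² + 2 y g') = ∫ (y' - g)² - ∫ g²`, so the functional is at least `-∫ g² = 4/π - π/2`.
-/

open Real intervalIntegral MeasureTheory Set

section CompletingSquare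

variable {a b : ℝ} {y y' g g' : ℝ → ℝ}

theorem integral_sq_add_two_mul_eq_integral_sub_sq_sub
    (hab : a ≤ b) (hy : ContinuousOn y (Icc a b)) (hy' : ContinuousOn y' (Icc a b))
    (hyd : ∀ x ∈ Ioo a b, HasDerivAt y (y' x) x) (hya : y a = 0) (hyb : y b = 0)
    (hg : ContinuousOn g (Icc a b)) (hg' : ContinuousOn g' (Icc a b))
    (hgd : ∀ x ∈ Ioo a b, HasDerivAt g (g' x) x) :
    ∫ x in a..b, (y' x ^ 2 + 2 * y x * g' x) =
      (∫ x in a..b, (y' x - g x) ^ 2) - ∫ x in a..b, g x ^ 2 := by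
  have hcont {f : ℝ → ℝ} (hf : ContinuousOn f (Icc a b)) : IntervalIntegrable f volume a b :=
    hf.intervalIntegrable_of_Icc hab
  have hparts : ∫ x in a..b, 2 * (y' x * g x + y x * g' x) = 0 := by
    have hderiv : ∀ x ∈ Ioo a b, HasDerivAt (fun x => 2 * (y x * g x))
        (2 * (y' x * g x + y x * g' x)) x :=
      fun x hx => ((hyd x hx).mul (hgd x hx)).const_mul 2
    rw [integral_eq_sub_of_hasDerivAt_of_le hab (continuousOn_const.mul (hy.mul hg)) hderiv
      (hcont (continuousOn_const.mul ((hy'.mul hg).add (hy.mul hg'))))]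
    simp [hya, hyb]
  have hsq : IntervalIntegrable (fun x => (y' x - g x) ^ 2) volume a b :=
    hcont ((hy'.sub hg).pow 2)
  have hparts_int : IntervalIntegrable (fun x => 2 * (y' x * g x + y x * g' x)) volume a b :=
    hcont (continuousOn_const.mul ((hy'.mul hg).add (hy.mul hg')))
  have hg_sq : IntervalIntegrable (fun x => g x ^ 2) volume a b := hcont (hg.pow 2)
  calc ∫ x in a..b, (y' x ^ 2 + 2 * y x * g' x)
      = ∫ x in a..b, ((y' x - g x) ^ 2 + 2 * (y' x * g x + y x * g' x) - g x ^ 2) :=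
        integral_congr fun x _ => by ring
    _ = (∫ x in a..b, (y' x - g x) ^ 2) - ∫ x in a..b, g x ^ 2 := by
        rw [integral_sub (hsq.add hparts_int) hg_sq, integral_add hsq hparts_int, hparts, add_zero]

theorem neg_integral_sq_le_integral_sq_add_two_mul
    (hab : a ≤ b) (hy : ContinuousOn y (Icc a b)) (hy' : ContinuousOn y' (Icc a b))
    (hyd : ∀ x ∈ Ioo a b, HasDerivAt y (y' x) x) (hya : y a = 0) (hyb : y b = 0)
    (hg : ContinuousOn g (Icc a b)) (hg' : ContinuousOn g' (Icc a b))
    (hgd : ∀ x ∈ Ioo a b, HasDerivAt g (g' x) x) :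
    -∫ x in a..b, g x ^ 2 ≤ ∫ x in a..b, (y' x ^ 2 + 2 * y x * g' x) := by
  rw [integral_sq_add_two_mul_eq_integral_sub_sq_sub hab hy hy' hyd hya hyb hg hg' hgd]
  have hnonneg : 0 ≤ ∫ x in a..b, (y' x - g x) ^ 2 :=
    integral_nonneg_of_forall hab fun x => sq_nonneg _
  linarith

end CompletingSquare

theorem hasDerivAt_derivWithin_Icc {a b x : ℝ} {y : ℝ → ℝ}
    (hy : DifferentiableOn ℝ y (Icc a b)) (hx : x ∈ Ioo a b) :
    HasDerivAt y (derivWithin y (Icc a b) x) x := by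
  have hnhds : Icc a b ∈ nhds x := Icc_mem_nhds hx.1 hx.2
  rw [derivWithin_of_mem_nhds hnhds]
  exact ((hy x (Ioo_subset_Icc_self hx)).differentiableAt hnhds).hasDerivAt

theorem integral_two_div_pi_sub_cos_sq :
    ∫ x in -(π / 2)..π / 2, (2 / π - cos x) ^ 2 = π / 2 - 4 / π := by
  have hexpand : ∀ x, (2 / π - cos x) ^ 2 = ((2 / π) ^ 2 - 4 / π * cos x) + cos x ^ 2 :=
    fun x => by ring
  have hconst : IntervalIntegrable (fun _ : ℝ => (2 / π) ^ 2) volume (-(π / 2)) (π / 2) :=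
    intervalIntegrable_const
  have hcos : IntervalIntegrable (fun x => 4 / π * cos x) volume (-(π / 2)) (π / 2) :=
    intervalIntegrable_cos.const_mul _
  have hcos_sq : IntervalIntegrable (fun x => cos x ^ 2) volume (-(π / 2)) (π / 2) :=
    (continuous_cos.pow 2).intervalIntegrable _ _
  simp_rw [hexpand]
  rw [intervalIntegral.integral_add (hconst.sub hcos) hcos_sq,
    intervalIntegral.integral_sub hconst hcos, intervalIntegral.integral_const,
    intervalIntegral.integral_const_mul, integral_cos, integral_cos_sq]
  simp only [sin_neg, cos_neg, sin_pi_div_two, cos_pi_div_two, smul_eq_mul]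
  field_simp [pi_pos.ne']
  ring

/-- Example 4 lower bound: any C¹ competitor with zero boundary values at
`±π/2` gives functional value at least `4/π - π/2`. -/
theorem example4_lower_bound
    (y : ℝ → ℝ) (hy : ContDiffOn ℝ 1 y (Set.Icc (-(π / 2)) (π / 2)))
    (hb1 : y (-(π / 2)) = 0) (hb2 : y (π / 2) = 0) :
    ∫ x in (-(π / 2))..(π / 2),
      ((deriv y x) ^ 2 - 2 * y x * Real.cos (x + π / 2)) ≥ 4 / π - π / 2 := by
  have hab : -(π / 2) < π / 2 := by linarith [pi_pos]
  set y' := derivWithin y (Icc (-(π / 2)) (π / 2))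
  have hyd : ∀ x ∈ Ioo (-(π / 2)) (π / 2), HasDerivAt y (y' x) x :=
    fun x hx => hasDerivAt_derivWithin_Icc (hy.differentiableOn one_ne_zero) hx
  have hbound := neg_integral_sq_le_integral_sq_add_two_mul hab.le hy.continuousOn
    (hy.continuousOn_derivWithin (uniqueDiffOn_Icc hab) le_rfl) hyd hb1 hb2
    (g := fun x => 2 / π - cos x) (continuous_const.sub continuous_cos).continuousOn
    continuous_sin.continuousOn fun x _ => by simpa using (hasDerivAt_cos x).const_sub (2 / π)
  rw [integral_two_div_pi_sub_cos_sq, neg_sub] at hbound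
  rw [ge_iff_le, integral_congr_Ioo_of_le hab.le
    (g := fun x => y' x ^ 2 + 2 * y x * sin x) fun x hx => by
    simp only [(hyd x hx).deriv, cos_add_pi_div_two, mul_neg, sub_neg_eq_add]]
  exact hbound
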